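/- Let a = [a_ε], b = [b_ε] ∈ ρℝ̃ with a < b (i.e., b - a is nonnegative and invertible). Then the sharp interior of the interval [a, b] = {x ∈ ρℝ̃ : a ≤ x ≤ b} is dense in [a, b] with respect to the sharp topology. In particular, every point of [a, b] is a sharp-topology limit of points x with a < x < b. -/

import Mathlib

/-!
Since `a < b`, eventually `b - a ≥ c ρ^q` for some `c > 0`, and conversely such a lower bound on
`v - u` gives `u < v`. Push `x` towards the midpoint: `y = x + ρ^M ((a + b)/2 - x)`. Then
`y - a = (1 - ρ^M)(x - a) + ρ^M (b - a)/2`, where the first term is at least minus a negligible net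
and the second at least `(c/2) ρ^(M+q)`; symmetrically for `b - y`. As `(a + b)/2 - x` is moderate,
a large `M` makes `|y - x| ≤ ρ^m`.
-/

open Filter Topology

/-- A gauge: a net of positive reals on (0,1] tending to 0 as ε → 0⁺. -/
def IsGauge (ρ : ℝ → ℝ) : Prop :=
  (∀ ε ∈ Set.Ioc (0:ℝ) 1, 0 < ρ ε) ∧ Tendsto ρ (𝓝[>] (0:ℝ)) (𝓝 0)

/-- A net (x_ε) is ρ-moderate. -/
def Moderate (ρ x : ℝ → ℝ) : Prop :=
  ∃ a : ℝ, 0 < a ∧ ∃ C : ℝ, ∀ᶠ ε in 𝓝[>] (0:ℝ), |x ε| ≤ C * ρ ε ^ (-a)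

/-- A net (z_ε) is ρ-negligible. -/
def Negligible (ρ z : ℝ → ℝ) : Prop :=
  ∀ a : ℝ, 0 < a → ∃ C : ℝ, ∀ᶠ ε in 𝓝[>] (0:ℝ), |z ε| ≤ C * ρ ε ^ a

/-- Two moderate nets represent the same element of ρℝ̃. -/
def GEquiv (ρ x y : ℝ → ℝ) : Prop := Negligible ρ (x - y)

/-- The order on ρℝ̃ at the level of representatives. -/
def GLe (ρ x y : ℝ → ℝ) : Prop :=
  ∃ z : ℝ → ℝ, Negligible ρ z ∧ ∀ᶠ ε in 𝓝[>] (0:ℝ), x ε ≤ y ε + z ε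

/-- [x] is invertible in ρℝ̃. -/
def GInvertible (ρ x : ℝ → ℝ) : Prop :=
  ∃ y : ℝ → ℝ, Moderate ρ y ∧ GEquiv ρ (x * y) 1

/-- x < y in ρℝ̃: y - x is nonnegative and invertible. -/
def GLt (ρ x y : ℝ → ℝ) : Prop := GLe ρ x y ∧ GInvertible ρ (y - x)

variable {ρ : ℝ → ℝ}

theorem IsGauge.eventually_pos_lt_one (hρ : IsGauge ρ) :
    ∀ᶠ ε in 𝓝[>] (0:ℝ), 0 < ρ ε ∧ ρ ε < 1 := by
  filter_upwards [Ioo_mem_nhdsGT_of_mem (⟨le_rfl, one_pos⟩ : (0:ℝ) ∈ Set.Ico 0 1),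
    hρ.2.eventually_lt_const one_pos] with ε hε hlt
  exact ⟨hρ.1 ε ⟨hε.1, hε.2.le⟩, hlt⟩

theorem IsGauge.eventually_rpow_le_rpow (hρ : IsGauge ρ) {p q : ℝ} (hpq : p ≤ q) :
    ∀ᶠ ε in 𝓝[>] (0:ℝ), ρ ε ^ q ≤ ρ ε ^ p := by
  filter_upwards [hρ.eventually_pos_lt_one] with ε hε
  exact Real.rpow_le_rpow_of_exponent_ge hε.1 hε.2.le hpq

theorem IsGauge.eventually_mul_le (hρ : IsGauge ρ) (C : ℝ) {c : ℝ} (hc : 0 < c) :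
    ∀ᶠ ε in 𝓝[>] (0:ℝ), C * ρ ε ≤ c := by
  have h := hρ.2.const_mul C
  rw [mul_zero] at h
  exact (h.eventually_lt_const hc).mono fun _ => le_of_lt

theorem Negligible.of_eventually_eq_zero {z : ℝ → ℝ} (h : ∀ᶠ ε in 𝓝[>] (0:ℝ), z ε = 0) :
    Negligible ρ z :=
  fun _ _ => ⟨0, h.mono fun ε hε => by simp [hε]⟩

theorem Negligible.eventually_abs_le (hρ : IsGauge ρ) {z : ℝ → ℝ} (hz : Negligible ρ z)
    {c : ℝ} (hc : 0 < c) (q : ℝ) :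
    ∀ᶠ ε in 𝓝[>] (0:ℝ), |z ε| ≤ c * ρ ε ^ q := by
  obtain ⟨C, hC⟩ := hz (max q 0 + 1) (by positivity)
  filter_upwards [hC, hρ.eventually_pos_lt_one, hρ.eventually_mul_le C hc,
    hρ.eventually_rpow_le_rpow (le_max_left q 0)] with ε hzε hρε hCρ hmono
  calc |z ε| ≤ C * ρ ε ^ (max q 0 + 1) := hzε
    _ = C * ρ ε * ρ ε ^ max q 0 := by rw [Real.rpow_add_one hρε.1.ne']; ring
    _ ≤ c * ρ ε ^ q := mul_le_mul hCρ hmono (Real.rpow_nonneg hρε.1.le _) hc.le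

theorem Moderate.of_eventually_abs_le (hρ : IsGauge ρ) {x : ℝ → ℝ} {C A : ℝ}
    (h : ∀ᶠ ε in 𝓝[>] (0:ℝ), |x ε| ≤ C * ρ ε ^ (-A)) : Moderate ρ x := by
  refine ⟨max A 1, lt_max_of_lt_right one_pos, max C 0, ?_⟩
  filter_upwards [h, hρ.eventually_pos_lt_one,
    hρ.eventually_rpow_le_rpow (neg_le_neg (le_max_left A 1))] with ε hxε hρε hmono
  exact hxε.trans <| mul_le_mul (le_max_left C 0) hmono (Real.rpow_nonneg hρε.1.le _)
    (le_max_right C 0)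

theorem Moderate.mono {x y : ℝ → ℝ} (hx : Moderate ρ x)
    (h : ∀ᶠ ε in 𝓝[>] (0:ℝ), |y ε| ≤ |x ε|) : Moderate ρ y := by
  obtain ⟨A, hA, C, hC⟩ := hx
  exact ⟨A, hA, C, (h.and hC).mono fun _ h => h.1.trans h.2⟩

theorem Moderate.eventually_abs_le (hρ : IsGauge ρ) {x : ℝ → ℝ} (hx : Moderate ρ x) :
    ∀ᶠ N : ℝ in atTop, ∀ᶠ ε in 𝓝[>] (0:ℝ), |x ε| ≤ ρ ε ^ (-N) := by
  obtain ⟨A, -, C, hC⟩ := hx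
  filter_upwards [eventually_ge_atTop (A + 1)] with N hN
  filter_upwards [hC, hρ.eventually_pos_lt_one, hρ.eventually_mul_le C one_pos,
    hρ.eventually_rpow_le_rpow (neg_le_neg hN)] with ε hxε hρε hCρ hmono
  calc |x ε| ≤ C * ρ ε ^ (-A) := hxε
    _ = C * ρ ε * ρ ε ^ (-(A + 1)) := by
      rw [mul_assoc, mul_comm (ρ ε), ← Real.rpow_add_one hρε.1.ne', neg_add,
        neg_add_cancel_right]
    _ ≤ 1 * ρ ε ^ (-N) := mul_le_mul hCρ hmono (Real.rpow_nonneg hρε.1.le _) zero_le_one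
    _ = ρ ε ^ (-N) := one_mul _

theorem Moderate.add (hρ : IsGauge ρ) {x y : ℝ → ℝ} (hx : Moderate ρ x) (hy : Moderate ρ y) :
    Moderate ρ (x + y) := by
  obtain ⟨N, hxN, hyN⟩ := ((hx.eventually_abs_le hρ).and (hy.eventually_abs_le hρ)).exists
  refine Moderate.of_eventually_abs_le hρ (C := 2) (A := N) ?_
  filter_upwards [hxN, hyN] with ε hxε hyε
  calc |(x + y) ε| ≤ |x ε| + |y ε| := abs_add_le _ _
    _ ≤ 2 * ρ ε ^ (-N) := by linarith

theorem Moderate.neg {x : ℝ → ℝ} (hx : Moderate ρ x) : Moderate ρ (-x) :=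
  hx.mono (Eventually.of_forall fun ε => by simp)

theorem Moderate.sub (hρ : IsGauge ρ) {x y : ℝ → ℝ} (hx : Moderate ρ x) (hy : Moderate ρ y) :
    Moderate ρ (x - y) := by
  simpa only [sub_eq_add_neg] using hx.add hρ hy.neg

theorem Moderate.const_smul {x : ℝ → ℝ} (hx : Moderate ρ x) (c : ℝ) : Moderate ρ (c • x) := by
  obtain ⟨A, hA, C, hC⟩ := hx
  refine ⟨A, hA, |c| * C, hC.mono fun ε h => ?_⟩
  rw [Pi.smul_apply, smul_eq_mul, abs_mul, mul_assoc]
  exact mul_le_mul_of_nonneg_left h (abs_nonneg c)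

theorem Moderate.rpow_mul (hρ : IsGauge ρ) {x : ℝ → ℝ} (hx : Moderate ρ x) {M : ℝ} (hM : 0 ≤ M) :
    Moderate ρ ((fun ε => ρ ε ^ M) * x) := by
  refine hx.mono ?_
  filter_upwards [hρ.eventually_pos_lt_one] with ε hρε
  rw [Pi.mul_apply, abs_mul, abs_of_pos (Real.rpow_pos_of_pos hρε.1 M)]
  exact mul_le_of_le_one_left (abs_nonneg _) (Real.rpow_le_one hρε.1.le hρε.2.le hM)

theorem GLt.of_eventually_le (hρ : IsGauge ρ) {u v : ℝ → ℝ} {c q : ℝ} (hc : 0 < c)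
    (h : ∀ᶠ ε in 𝓝[>] (0:ℝ), c * ρ ε ^ q ≤ v ε - u ε) : GLt ρ u v := by
  have hlow : ∀ᶠ ε in 𝓝[>] (0:ℝ), 0 < c * ρ ε ^ q ∧ c * ρ ε ^ q ≤ v ε - u ε := by
    filter_upwards [h, hρ.eventually_pos_lt_one] with ε hε hρε
    exact ⟨mul_pos hc (Real.rpow_pos_of_pos hρε.1 q), hε⟩
  have hpos : ∀ᶠ ε in 𝓝[>] (0:ℝ), 0 < v ε - u ε := hlow.mono fun _ h => h.1.trans_le h.2
  refine ⟨⟨0, Negligible.of_eventually_eq_zero (Eventually.of_forall fun _ => rfl), ?_⟩,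
    (v - u)⁻¹, ?_, ?_⟩
  · filter_upwards [hpos] with ε hε
    simp only [Pi.zero_apply, add_zero]
    linarith
  · refine Moderate.of_eventually_abs_le hρ (C := c⁻¹) (A := q) ?_
    filter_upwards [hlow, hpos, hρ.eventually_pos_lt_one] with ε hε hε' hρε
    rw [Pi.inv_apply, Pi.sub_apply, abs_of_pos (inv_pos.2 hε'), Real.rpow_neg hρε.1.le, ← mul_inv]
    exact inv_anti₀ hε.1 hε.2
  · exact Negligible.of_eventually_eq_zero (hpos.mono fun ε hε => by simp [hε.ne'])

theorem GLt.exists_eventually_le (hρ : IsGauge ρ) {u v : ℝ → ℝ} (h : GLt ρ u v) :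
    ∃ q : ℝ, ∀ᶠ ε in 𝓝[>] (0:ℝ), 2⁻¹ * ρ ε ^ q ≤ v ε - u ε := by
  obtain ⟨⟨z, hz, hle⟩, w, hw, hinv⟩ := h
  obtain ⟨N, hwN⟩ := (hw.eventually_abs_le hρ).exists
  refine ⟨N, ?_⟩
  filter_upwards [hle, hwN, hz.eventually_abs_le hρ (c := 4⁻¹) (by norm_num) N,
    hinv.eventually_abs_le hρ (c := 2⁻¹) (by norm_num) 0, hρ.eventually_pos_lt_one]
    with ε hleε hwε hzε hinvε hρε
  set s := ρ ε ^ N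
  have hs : 0 < s := Real.rpow_pos_of_pos hρε.1 N
  rw [Real.rpow_neg hρε.1.le] at hwε
  simp only [Pi.sub_apply, Pi.mul_apply, Pi.one_apply, Real.rpow_zero, mul_one] at hinvε
  -- `|(v - u) w - 1| ≤ 1/2` with `|w| ≤ s⁻¹` forces `|v - u| ≥ s/2`; the sign comes from `u ≲ v`.
  have habs : 2⁻¹ * s ≤ |v ε - u ε| := by
    have h1 : 2⁻¹ ≤ |v ε - u ε| * |w ε| := by
      rw [← abs_mul]
      linarith [(abs_le.mp hinvε).1, le_abs_self ((v ε - u ε) * w ε)]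
    have h2 : |v ε - u ε| * |w ε| ≤ |v ε - u ε| * s⁻¹ :=
      mul_le_mul_of_nonneg_left hwε (abs_nonneg _)
    have h3 : |v ε - u ε| * s⁻¹ * s = |v ε - u ε| := by field_simp
    nlinarith
  have hlow : -(4⁻¹ * s) ≤ v ε - u ε := by linarith [le_abs_self (z ε)]
  rcases abs_cases (v ε - u ε) with ⟨he, -⟩ | ⟨he, -⟩ <;> linarith

theorem GLt.of_sub_eq_convex_comb (hρ : IsGauge ρ) {u v r s z : ℝ → ℝ} {c q M : ℝ}
    (hc : 0 < c) (hM : 0 ≤ M) (hz : Negligible ρ z) (hr : ∀ᶠ ε in 𝓝[>] (0:ℝ), 0 ≤ r ε + z ε)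
    (hs : ∀ᶠ ε in 𝓝[>] (0:ℝ), c * ρ ε ^ q ≤ s ε)
    (huv : ∀ ε, v ε - u ε = (1 - ρ ε ^ M) * r ε + ρ ε ^ M * s ε) : GLt ρ u v := by
  refine GLt.of_eventually_le hρ (half_pos hc) (q := M + q) ?_
  filter_upwards [hz.eventually_abs_le hρ (half_pos hc) (M + q), hr, hs,
    hρ.eventually_pos_lt_one] with ε hzε hrε hsε hρε
  have ht0 : 0 < ρ ε ^ M := Real.rpow_pos_of_pos hρε.1 M
  have ht1 : ρ ε ^ M ≤ 1 := Real.rpow_le_one hρε.1.le hρε.2.le hM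
  rw [Real.rpow_add hρε.1] at hzε ⊢
  rw [huv]
  have h1 : 0 ≤ (1 - ρ ε ^ M) * (r ε + |z ε|) :=
    mul_nonneg (by linarith) (by linarith [le_abs_self (z ε)])
  have h2 : ρ ε ^ M * (c * ρ ε ^ q) ≤ ρ ε ^ M * s ε := mul_le_mul_of_nonneg_left hsε ht0.le
  have h3 : 0 ≤ ρ ε ^ M * |z ε| := mul_nonneg ht0.le (abs_nonneg _)
  linarith

/-- If a < b in ρℝ̃ then the sharp interior of [a,b] is dense in [a,b]:
every point of [a,b] is a sharp limit of points y with a < y < b. -/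
theorem interior_dense_in_interval (ρ : ℝ → ℝ) (hρ : IsGauge ρ)
    (a b : ℝ → ℝ) (ha : Moderate ρ a) (hb : Moderate ρ b)
    (hab : GLt ρ a b) :
    ∀ x : ℝ → ℝ, Moderate ρ x → GLe ρ a x → GLe ρ x b →
      ∀ m : ℕ, ∃ y : ℝ → ℝ, Moderate ρ y ∧ GLt ρ a y ∧ GLt ρ y b ∧
        ∀ᶠ ε in 𝓝[>] (0:ℝ), |y ε - x ε| ≤ ρ ε ^ m := by
  rintro x hx ⟨z₁, hz₁, hax⟩ ⟨z₂, hz₂, hxb⟩ m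
  obtain ⟨q, hba⟩ := hab.exists_eventually_le hρ
  set d : ℝ → ℝ := (2⁻¹ : ℝ) • (a + b) - x
  have hd : Moderate ρ d := ((ha.add hρ hb).const_smul 2⁻¹).sub hρ hx
  obtain ⟨N, hN, hdN⟩ := ((eventually_ge_atTop 0).and (hd.eventually_abs_le hρ)).exists
  set M : ℝ := m + N
  have hM : 0 ≤ M := by positivity
  have hs : ∀ᶠ ε in 𝓝[>] (0:ℝ), 4⁻¹ * ρ ε ^ q ≤ (b ε - a ε) / 2 :=
    hba.mono fun _ h => by linarith
  refine ⟨x + (fun ε => ρ ε ^ M) * d, ?_, ?_, ?_, ?_⟩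
  · exact hx.add hρ (hd.rpow_mul hρ hM)
  · exact GLt.of_sub_eq_convex_comb hρ (r := x - a) (by norm_num) hM hz₁
      (hax.mono fun _ h => by simp only [Pi.sub_apply]; linarith) hs fun ε => by
        simp only [d, Pi.add_apply, Pi.sub_apply, Pi.mul_apply, Pi.smul_apply, smul_eq_mul]
        ring
  · exact GLt.of_sub_eq_convex_comb hρ (r := b - x) (by norm_num) hM hz₂
      (hxb.mono fun _ h => by simp only [Pi.sub_apply]; linarith) hs fun ε => by
        simp only [d, Pi.add_apply, Pi.sub_apply, Pi.mul_apply, Pi.smul_apply, smul_eq_mul]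
        ring
  · filter_upwards [hdN, hρ.eventually_pos_lt_one] with ε hdε hρε
    have ht : 0 < ρ ε ^ M := Real.rpow_pos_of_pos hρε.1 M
    calc |(x + (fun ε => ρ ε ^ M) * d) ε - x ε| = ρ ε ^ M * |d ε| := by
          rw [Pi.add_apply, add_sub_cancel_left, Pi.mul_apply, abs_mul, abs_of_pos ht]
      _ ≤ ρ ε ^ M * ρ ε ^ (-N) := mul_le_mul_of_nonneg_left hdε ht.le
      _ = ρ ε ^ m := by
          rw [← Real.rpow_add hρε.1, show M + -N = m by simp only [M]; ring, Real.rpow_natCast]
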